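/- Let Q = ⟨X,A,S,τ⟩ and Q' = ⟨X',A',S',τ'⟩ be QBAFs for explananda e and e' respectively, let a ∈ X ∩ X', and let Y = {a} ∪ {b ∈ X : paths(b,a) ≠ ∅ in Q}. Suppose {a} ∪ {b ∈ X' : paths(b,a) ≠ ∅ in Q'} = Y, τ(b) = τ'(b) for all b ∈ Y, A ∩ (Y×Y) = A' ∩ (Y×Y) and S ∩ (Y×Y) = S' ∩ (Y×Y). Then under the DF-QuAD evaluation, σ(Q,a) = σ(Q',a); that is, the DF-QuAD evaluation of an argument depends only on the sub-QBAF of arguments having a path to it. -/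

import Mathlib

universe u v

variable {U : Type u} {Ag : Type v}

/-- A bipolar argumentation framework (BAF): arguments `X`, attacks `Att`, supports `Supp`. -/
structure BAF (U : Type u) where
  X : Finset U
  Att : Finset (U × U)
  Supp : Finset (U × U)

namespace BAF

variable [DecidableEq U]

/-- The edges of a BAF: attacks together with supports. -/
def edges (B : BAF U) : Finset (U × U) := B.Att ∪ B.Supp

/-- A path from `a` to `b`: a nonempty list of consecutive edges `(c₀,c₁),…,(c_{n−1},cₙ)`
with `c₀ = a` and `cₙ = b`. -/
inductive IsPath (B : BAF U) : U → U → List (U × U) → Prop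
  | single {a b : U} (h : (a, b) ∈ B.edges) : IsPath B a b [(a, b)]
  | cons {a c b : U} {p : List (U × U)} (h : (a, c) ∈ B.edges)
      (hp : IsPath B c b p) : IsPath B a b ((a, c) :: p)

/-- `B ⊑ B'` for BAFs (componentwise inclusion). -/
def Sub (B B' : BAF U) : Prop := B.X ⊆ B'.X ∧ B.Att ⊆ B'.Att ∧ B.Supp ⊆ B'.Supp

/-- `B` is a BAF for the explanandum `e`. -/
structure IsFor (B : BAF U) (e : U) : Prop where
  e_mem : e ∈ B.X
  att_mem : ∀ p ∈ B.Att, p.1 ∈ B.X ∧ p.2 ∈ B.X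
  supp_mem : ∀ p ∈ B.Supp, p.1 ∈ B.X ∧ p.2 ∈ B.X
  disj : ∀ p : U × U, ¬(p ∈ B.Att ∧ p ∈ B.Supp)
  no_out : ∀ a : U, (e, a) ∉ B.edges
  reach : ∀ a ∈ B.X, a ≠ e → ∃ p, B.IsPath a e p
  acyclic : ∀ (a : U) (p : List (U × U)), ¬ B.IsPath a a p

/-- The number of attack edges occurring in a path. -/
def attCount (B : BAF U) (p : List (U × U)) : ℕ :=
  (p.filter (fun q => q ∈ B.Att)).length

/-- Pro arguments: arguments with a path to `e` containing an even number of attacks. -/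
def pro (B : BAF U) (e : U) : Set U :=
  {a | a ∈ B.X ∧ ∃ p, B.IsPath a e p ∧ Even (B.attCount p)}

/-- Con arguments: arguments with a path to `e` containing an odd number of attacks. -/
def con (B : BAF U) (e : U) : Set U :=
  {a | a ∈ B.X ∧ ∃ p, B.IsPath a e p ∧ Odd (B.attCount p)}

/-- The shortest path from `x` to `e` is strictly shorter than every path from `y` to `e`. -/
def SPlt (B : BAF U) (e x y : U) : Prop :=
  ∃ p, B.IsPath x e p ∧ ∀ q, B.IsPath y e q → p.length < q.length

end BAF

/-- A quantitative bipolar argumentation framework (QBAF), with base scores `bs`. -/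
structure QBAF (U : Type u) where
  X : Finset U
  Att : Finset (U × U)
  Supp : Finset (U × U)
  bs : U → ℝ

namespace QBAF

variable [DecidableEq U]

def toBAF (Q : QBAF U) : BAF U := ⟨Q.X, Q.Att, Q.Supp⟩

def edges (Q : QBAF U) : Finset (U × U) := Q.Att ∪ Q.Supp

/-- `Q` is a QBAF for `e`: its underlying BAF is for `e` and base scores lie in `[0,1]`. -/
def IsFor (Q : QBAF U) (e : U) : Prop :=
  Q.toBAF.IsFor e ∧ ∀ a ∈ Q.X, Q.bs a ∈ Set.Icc (0 : ℝ) 1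

/-- `Q ⊑ Q'` for QBAFs. -/
def Sub (Q Q' : QBAF U) : Prop :=
  Q.X ⊆ Q'.X ∧ Q.Att ⊆ Q'.Att ∧ Q.Supp ⊆ Q'.Supp ∧ ∀ a ∈ Q.X, Q'.bs a = Q.bs a

def attackers (Q : QBAF U) (a : U) : Finset U :=
  (Q.Att.filter (fun p => p.2 = a)).image Prod.fst

def supporters (Q : QBAF U) (a : U) : Finset U :=
  (Q.Supp.filter (fun p => p.2 = a)).image Prod.fst

end QBAF

/-- The DF-QuAD aggregation function on finite lists of values. -/
noncomputable def dfAgg : List ℝ → ℝ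
  | [] => 0
  | v :: vs => v + dfAgg vs - v * dfAgg vs

/-- The DF-QuAD combination function. -/
noncomputable def dfComb (v0 vm vp : ℝ) : ℝ :=
  if vp ≤ vm then v0 - v0 * |vp - vm| else v0 + (1 - v0) * |vp - vm|

/-- `f` is the DF-QuAD evaluation of the QBAF `Q`. -/
def IsDFQuADEval [DecidableEq U] (Q : QBAF U) (f : U → ℝ) : Prop :=
  ∀ a ∈ Q.X,
    f a = dfComb (Q.bs a) (dfAgg ((Q.attackers a).toList.map f))
        (dfAgg ((Q.supporters a).toList.map f))

/-- The stance determined by an evaluation value in `[0,1]`: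
`−` (coded `-1`) on `[0,0.5)`, `0` on `{0.5}`, `+` (coded `1`) on `(0.5,1]`. -/
noncomputable def stanceVal (v : ℝ) : ℤ :=
  if v < 1 / 2 then -1 else if v = 1 / 2 then 0 else 1

/-- An argumentative exchange (AX): exchange BAFs `B`, private QBAFs `Q`,
and a contributor mapping `contrib`. -/
structure AX (U : Type u) (Ag : Type v) where
  n : ℕ
  B : ℕ → BAF U
  Q : Ag → ℕ → QBAF U
  contrib : U × U → Ag × ℕ

namespace AX

variable [DecidableEq U]

/-- `E` is an AX for the explanandum `e` amongst the agents `Ag`. -/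
structure IsAX (E : AX U Ag) (e : U) : Prop where
  n_pos : 0 < E.n
  agents : ∃ α β : Ag, α ≠ β
  B_for : ∀ t ≤ E.n, (E.B t).IsFor e
  B0_X : (E.B 0).X = {e}
  B0_Att : (E.B 0).Att = ∅
  B0_Supp : (E.B 0).Supp = ∅
  B_mono : ∀ t < E.n, (E.B t).Sub (E.B (t + 1))
  Q_for : ∀ (α : Ag), ∀ t ≤ E.n, (E.Q α t).IsFor e
  Q_mono : ∀ (α : Ag), ∀ t < E.n, (E.Q α t).Sub (E.Q α (t + 1))
  Q_diff_X : ∀ (α : Ag), ∀ t < E.n,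
    (E.Q α (t + 1)).X \ (E.Q α t).X ⊆ (E.B (t + 1)).X \ (E.B t).X
  Q_diff_Att : ∀ (α : Ag), ∀ t < E.n,
    (E.Q α (t + 1)).Att \ (E.Q α t).Att ⊆ (E.B (t + 1)).Att \ (E.B t).Att
  Q_diff_Supp : ∀ (α : Ag), ∀ t < E.n,
    (E.Q α (t + 1)).Supp \ (E.Q α t).Supp ⊆ (E.B (t + 1)).Supp \ (E.B t).Supp
  learn_X : ∀ (α : Ag), ∀ t < E.n,
    (E.B (t + 1)).X \ (E.B t).X ⊆ (E.Q α (t + 1)).X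
  learn_Att : ∀ (α : Ag), ∀ t < E.n,
    (E.B (t + 1)).Att \ (E.B t).Att ⊆ (E.Q α (t + 1)).Att
  learn_Supp : ∀ (α : Ag), ∀ t < E.n,
    (E.B (t + 1)).Supp \ (E.B t).Supp ⊆ (E.Q α (t + 1)).Supp
  contrib_pos : ∀ p ∈ (E.B E.n).edges, 0 < (E.contrib p).2
  contrib_le : ∀ p ∈ (E.B E.n).edges, (E.contrib p).2 ≤ E.n
  contrib_mem : ∀ p ∈ (E.B E.n).edges, p ∈ (E.B (E.contrib p).2).edges
  contrib_new : ∀ p ∈ (E.B E.n).edges, p ∉ (E.B ((E.contrib p).2 - 1)).edges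

/-- The set of edges contributed by agent `α` at timestep `t`. -/
def Cset [DecidableEq Ag] (E : AX U Ag) (α : Ag) (t : ℕ) : Finset (U × U) :=
  (E.B E.n).edges.filter (fun p => E.contrib p = (α, t))

end AX

/-- All agents hold the same stance at timestep `t`. -/
def ResolvedAt (st : Ag → ℕ → ℤ) (t : ℕ) : Prop := ∀ α β : Ag, st α t = st β t

/-- The AX (with an initial conflict) is resolved. -/
def Resolved (E : AX U Ag) (st : Ag → ℕ → ℤ) : Prop :=
  ¬ ResolvedAt st 0 ∧ ResolvedAt st E.n ∧ ∀ t, 0 < t → t < E.n → ¬ ResolvedAt st t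

/-- The AX (with an initial conflict) is unresolved. -/
def Unresolved (E : AX U Ag) (st : Ag → ℕ → ℤ) : Prop :=
  ¬ ResolvedAt st 0 ∧ ∀ t, 0 < t → t ≤ E.n → ¬ ResolvedAt st t

/-- Agent `α` is arguing for `e` at `t`: some agent has a strictly smaller stance. -/
def ArguingFor (st : Ag → ℕ → ℤ) (α : Ag) (t : ℕ) : Prop := ∃ β, st β t < st α t

/-- Agent `α` is arguing against `e` at `t`: some agent has a strictly greater stance. -/
def ArguingAgainst (st : Ag → ℕ → ℤ) (α : Ag) (t : ℕ) : Prop := ∃ β, st α t < st β t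

section Behaviours

variable [DecidableEq U]

/-- Condition (1) of the greedy behaviour: `(a,b)` is a pair of the private QBAF `Qp`
not yet in the exchange BAF `Bp`, in line with the agent's state (`forE`). -/
def GreedyEligible (Qp : QBAF U) (Bp : BAF U) (e : U) (forE : Bool) (a b : U) : Prop :=
  (a, b) ∈ Qp.edges ∧ (a, b) ∉ Bp.edges ∧
    (if forE then
        ((a, b) ∈ Qp.Supp ∧ (b ∈ Bp.pro e ∨ b = e)) ∨ ((a, b) ∈ Qp.Att ∧ b ∈ Bp.con e)
      else
        ((a, b) ∈ Qp.Supp ∧ b ∈ Bp.con e) ∨ ((a, b) ∈ Qp.Att ∧ (b ∈ Bp.pro e ∨ b = e)))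

/-- A greedy choice: eligible, of maximal strength (2), and closest to `e` among
equally strong eligible pairs (3). -/
def GreedyChoice (Qp : QBAF U) (Bp : BAF U) (σα : U → ℝ) (e : U) (forE : Bool)
    (a b : U) : Prop :=
  GreedyEligible Qp Bp e forE a b ∧
    (∀ a' b' : U, GreedyEligible Qp Bp e forE a' b' → σα a' ≤ σα a) ∧
    (∀ a'' b'' : U, GreedyEligible Qp Bp e forE a'' b'' → σα a'' = σα a →
      ¬ BAF.SPlt Qp.toBAF e a'' a)

/-- A contribution set is a correct greedy contribution: empty or a single greedy choice. -/
def GreedyOK (Qp : QBAF U) (Bp : BAF U) (σα : U → ℝ) (e : U) (forE : Bool)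
    (C : Finset (U × U)) : Prop :=
  C = ∅ ∨ ∃ a b : U, C = {(a, b)} ∧ GreedyChoice Qp Bp σα e forE a b

/-- Agent `α` exhibits greedy behaviour throughout the AX `E`. -/
def GreedyBehaviour [DecidableEq Ag] (E : AX U Ag) (e : U)
    (ev : Ag → QBAF U → U → ℝ) (st : Ag → ℕ → ℤ) (α : Ag) : Prop :=
  ∀ t, 0 < t → t ≤ E.n →
    E.Cset α t = ∅ ∨
      ∃ a b : U, E.Cset α t = {(a, b)} ∧
        (ArguingFor st α (t - 1) →
          GreedyChoice (E.Q α (t - 1)) (E.B (t - 1)) (ev α (E.Q α (t - 1))) e true a b) ∧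
        (ArguingAgainst st α (t - 1) →
          GreedyChoice (E.Q α (t - 1)) (E.B (t - 1)) (ev α (E.Q α (t - 1))) e false a b)

/-- The inner condition of the shallow behaviour for a contribution set `C`. -/
def ShallowInner (Qp : QBAF U) (Bp : BAF U) (σα : U → ℝ) (e : U) (forE : Bool)
    (C : Finset (U × U)) (max : ℕ) : Prop :=
  C.card ≤ max ∧ (∀ p ∈ C, p.2 = e) ∧
    (if forE then
        C ⊆ Qp.Supp \ Bp.Supp ∧
          ∀ p ∈ C, ∀ b : U, (b, e) ∈ Qp.Supp → (b, e) ∉ Bp.Supp ∪ C → σα b ≤ σα p.1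
      else
        C ⊆ Qp.Att \ Bp.Att ∧
          ∀ p ∈ C, ∀ b : U, (b, e) ∈ Qp.Att → (b, e) ∉ Bp.Att ∪ C → σα b ≤ σα p.1)

/-- A contribution set is a correct shallow contribution: it satisfies the inner condition
and is of maximal cardinality doing so. -/
def ShallowOK (Qp : QBAF U) (Bp : BAF U) (σα : U → ℝ) (e : U) (forE : Bool)
    (C : Finset (U × U)) (max : ℕ) : Prop :=
  ShallowInner Qp Bp σα e forE C max ∧
    ∀ C' : Finset (U × U), ShallowInner Qp Bp σα e forE C' max → C'.card ≤ C.card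

/-- A private view of the exchange BAF `Bp` by an agent with private QBAF `Qα`. -/
def PrivateView (Bp : BAF U) (Qα : QBAF U) (V : QBAF U) : Prop :=
  Bp.Sub V.toBAF ∧ V.Sub Qα

/-- `ε` is the perceived effect on `e` of the pair `(a,b)` for an agent with private QBAF
`Qp` given the exchange BAF `Bp` (under the DF-QuAD evaluation). -/
def PerceivedEffect (Qp : QBAF U) (Bp : BAF U) (e a b : U) (ε : ℝ) : Prop :=
  ∃ (V V' : QBAF U) (f f' : U → ℝ),
    PrivateView Bp Qp V ∧
    V'.X = insert a V.X ∧
    V'.Att = (V'.X ×ˢ V'.X) ∩ Qp.Att ∧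
    V'.Supp = (V'.X ×ˢ V'.X) ∩ Qp.Supp ∧
    (∀ x ∈ V'.X, V'.bs x = Qp.bs x) ∧
    IsDFQuADEval V f ∧ IsDFQuADEval V' f' ∧
    ε = f' e - f e

/-- A pair eligible for the counterfactual behaviour. -/
def CFEligible (Qp : QBAF U) (Bp : BAF U) (a b : U) : Prop :=
  (a, b) ∈ Qp.edges ∧ (a, b) ∉ Bp.edges ∧ a ∈ Qp.X ∧ a ∉ Bp.X ∧ b ∈ Bp.X

/-- Agent `α` exhibits counterfactual behaviour throughout the AX `E`,
where `εf α t a b` is the perceived effect of `(a,b)` at timestep `t`. -/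
def CFBehaviour [DecidableEq Ag] (E : AX U Ag) (st : Ag → ℕ → ℤ)
    (εf : Ag → ℕ → U → U → ℝ) (α : Ag) : Prop :=
  ∀ t, 0 < t → t ≤ E.n →
    E.Cset α t = ∅ ∨
      ∃ a b : U, E.Cset α t = {(a, b)} ∧
        CFEligible (E.Q α (t - 1)) (E.B (t - 1)) a b ∧
        (ArguingFor st α (t - 1) →
          0 < εf α t a b ∧
            ∀ a' b' : U, CFEligible (E.Q α (t - 1)) (E.B (t - 1)) a' b' →
              εf α t a' b' ≤ εf α t a b) ∧
        (ArguingAgainst st α (t - 1) →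
          εf α t a b < 0 ∧
            ∀ a' b' : U, CFEligible (E.Q α (t - 1)) (E.B (t - 1)) a' b' →
              εf α t a b ≤ εf α t a' b')

end Behaviours

/-!
Every argument with a path to `a` in `Q` or `Q'` lies in `Y`, so `Y` contains all attackers and
supporters of its members in both frameworks, and both frameworks agree on them. The DF-QuAD
equation at any `b ∈ Y` therefore has the same inputs in `Q` and `Q'`, and the claim follows by
induction on the number of ancestors of `b` in `Q`, which strictly decreases along an edge since
`Q` is acyclic.
-/

namespace BAF

variable [DecidableEq U]

def ancestors (B : BAF U) (a : U) : Set U := {b | b ∈ B.X ∧ ∃ p, B.IsPath b a p}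

theorem IsPath.concat {B : BAF U} {d c b : U} {p : List (U × U)}
    (hp : B.IsPath d c p) (h : (c, b) ∈ B.edges) : B.IsPath d b (p ++ [(c, b)]) := by
  induction hp with
  | single h' => exact .cons h' (.single h)
  | cons h' _ ih => exact .cons h' (ih h)

theorem IsFor.fst_mem {B : BAF U} {e : U} (hB : B.IsFor e) {q : U × U} (hq : q ∈ B.edges) :
    q.1 ∈ B.X := by
  rcases Finset.mem_union.mp hq with h | h
  · exact (hB.att_mem q h).1
  · exact (hB.supp_mem q h).1

theorem singleton_union_ancestors_subset {B : BAF U} {a : U} (ha : a ∈ B.X) :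
    {a} ∪ B.ancestors a ⊆ ↑B.X :=
  Set.union_subset (Set.singleton_subset_iff.mpr ha) fun _ hb => hb.1

theorem mem_ancestors_of_edge {B : BAF U} {a b c : U} (hcX : c ∈ B.X)
    (hb : b ∈ {a} ∪ B.ancestors a) (hc : (c, b) ∈ B.edges) : c ∈ B.ancestors a := by
  rcases hb with rfl | ⟨_, p, hp⟩
  · exact ⟨hcX, _, .single hc⟩
  · exact ⟨hcX, _, .cons hc hp⟩

theorem ancestors_ssubset_of_edge {B : BAF U} (hacyc : ∀ a p, ¬ B.IsPath a a p) {b c : U}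
    (hcX : c ∈ B.X) (hc : (c, b) ∈ B.edges) : B.ancestors c ⊂ B.ancestors b := by
  refine Set.ssubset_iff_subset_ne.mpr ⟨fun d ⟨hdX, p, hp⟩ => ⟨hdX, _, hp.concat hc⟩, ?_⟩
  intro heq
  have hc_anc : c ∈ B.ancestors b := ⟨hcX, _, .single hc⟩
  obtain ⟨_, p, hp⟩ := heq ▸ hc_anc
  exact hacyc c p hp

theorem ncard_ancestors_lt_of_edge {B : BAF U} (hacyc : ∀ a p, ¬ B.IsPath a a p) {b c : U}
    (hcX : c ∈ B.X) (hc : (c, b) ∈ B.edges) : (B.ancestors c).ncard < (B.ancestors b).ncard :=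
  Set.ncard_lt_ncard (ancestors_ssubset_of_edge hacyc hcX hc)
    (B.X.finite_toSet.subset fun _ hd => hd.1)

end BAF

theorem Finset.mem_iff_of_coe_inter_prod_eq {α : Type*} {R R' : Finset (α × α)} {Z : Set α}
    (h : (↑R : Set (α × α)) ∩ Z ×ˢ Z = ↑R' ∩ Z ×ˢ Z) {c b : α} (hc : c ∈ Z) (hb : b ∈ Z) :
    (c, b) ∈ R ↔ (c, b) ∈ R' := by
  simpa [hc, hb] using Set.ext_iff.mp h (c, b)

namespace QBAF

variable [DecidableEq U]

@[simp]
theorem mem_attackers (Q : QBAF U) (c b : U) : c ∈ Q.attackers b ↔ (c, b) ∈ Q.Att := by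
  simp [attackers]

@[simp]
theorem mem_supporters (Q : QBAF U) (c b : U) : c ∈ Q.supporters b ↔ (c, b) ∈ Q.Supp := by
  simp [supporters]

variable {Q Q' : QBAF U} {Z : Set U} {b : U}

theorem attackers_eq_of_inter_eq (hA : (↑Q.Att : Set (U × U)) ∩ Z ×ˢ Z = ↑Q'.Att ∩ Z ×ˢ Z)
    (hb : b ∈ Z) (hcl : ∀ c, (c, b) ∈ Q.Att → c ∈ Z) (hcl' : ∀ c, (c, b) ∈ Q'.Att → c ∈ Z) :
    Q.attackers b = Q'.attackers b := by
  ext c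
  simp only [mem_attackers]
  exact ⟨fun h => (Finset.mem_iff_of_coe_inter_prod_eq hA (hcl c h) hb).mp h,
    fun h => (Finset.mem_iff_of_coe_inter_prod_eq hA (hcl' c h) hb).mpr h⟩

theorem supporters_eq_of_inter_eq (hS : (↑Q.Supp : Set (U × U)) ∩ Z ×ˢ Z = ↑Q'.Supp ∩ Z ×ˢ Z)
    (hb : b ∈ Z) (hcl : ∀ c, (c, b) ∈ Q.Supp → c ∈ Z) (hcl' : ∀ c, (c, b) ∈ Q'.Supp → c ∈ Z) :
    Q.supporters b = Q'.supporters b := by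
  ext c
  simp only [mem_supporters]
  exact ⟨fun h => (Finset.mem_iff_of_coe_inter_prod_eq hS (hcl c h) hb).mp h,
    fun h => (Finset.mem_iff_of_coe_inter_prod_eq hS (hcl' c h) hb).mpr h⟩

end QBAF

theorem IsDFQuADEval.eqOn_of_agree [DecidableEq U] {Q Q' : QBAF U} {f f' : U → ℝ}
    (hf : IsDFQuADEval Q f) (hf' : IsDFQuADEval Q' f')
    (hacyc : ∀ a p, ¬ Q.toBAF.IsPath a a p) {Z : Set U} (hZ : Z ⊆ ↑Q.X) (hZ' : Z ⊆ ↑Q'.X)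
    (hcl : ∀ b ∈ Z, ∀ c, (c, b) ∈ Q.toBAF.edges → c ∈ Z)
    (hcl' : ∀ b ∈ Z, ∀ c, (c, b) ∈ Q'.toBAF.edges → c ∈ Z)
    (hbs : ∀ b ∈ Z, Q.bs b = Q'.bs b)
    (hA : (↑Q.Att : Set (U × U)) ∩ Z ×ˢ Z = ↑Q'.Att ∩ Z ×ˢ Z)
    (hS : (↑Q.Supp : Set (U × U)) ∩ Z ×ˢ Z = ↑Q'.Supp ∩ Z ×ˢ Z) :
    Set.EqOn f f' Z := by
  intro b hb
  induction hn : (Q.toBAF.ancestors b).ncard using Nat.strong_induction_on generalizing b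
    with | _ n ih
  have hpred : ∀ c, (c, b) ∈ Q.toBAF.edges → f c = f' c := fun c hc =>
    ih _ (hn ▸ BAF.ncard_ancestors_lt_of_edge hacyc (hZ (hcl b hb c hc)) hc) (hcl b hb c hc) rfl
  have hatt := QBAF.attackers_eq_of_inter_eq hA hb
    (fun c h => hcl b hb c (Finset.mem_union_left _ h))
    (fun c h => hcl' b hb c (Finset.mem_union_left _ h))
  have hsupp := QBAF.supporters_eq_of_inter_eq hS hb
    (fun c h => hcl b hb c (Finset.mem_union_right _ h))
    (fun c h => hcl' b hb c (Finset.mem_union_right _ h))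
  rw [hf b (hZ hb), hf' b (hZ' hb), ← hatt, ← hsupp, hbs b hb]
  congr 2 <;> refine List.map_congr_left fun c hc => hpred c ?_
  · exact Finset.mem_union_left _ ((Q.mem_attackers c b).mp (Finset.mem_toList.mp hc))
  · exact Finset.mem_union_right _ ((Q.mem_supporters c b).mp (Finset.mem_toList.mp hc))

/-- the DF-QuAD evaluation of an argument depends only on the sub-QBAF of
arguments having a path to it. -/
theorem statement19 {U : Type u} [DecidableEq U] (e e' : U) (Q Q' : QBAF U)
    (hQ : Q.IsFor e) (hQ' : Q'.IsFor e')
    (a : U) (haQ : a ∈ Q.X) (haQ' : a ∈ Q'.X)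
    (Y : Set U)
    (hY : Y = {a} ∪ {b : U | b ∈ Q.X ∧ ∃ p, Q.toBAF.IsPath b a p})
    (hY' : ({a} ∪ {b : U | b ∈ Q'.X ∧ ∃ p, Q'.toBAF.IsPath b a p}) = Y)
    (hbs : ∀ b ∈ Y, Q.bs b = Q'.bs b)
    (hA : (↑Q.Att : Set (U × U)) ∩ (Y ×ˢ Y) = (↑Q'.Att : Set (U × U)) ∩ (Y ×ˢ Y))
    (hS : (↑Q.Supp : Set (U × U)) ∩ (Y ×ˢ Y) = (↑Q'.Supp : Set (U × U)) ∩ (Y ×ˢ Y))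
    (f f' : U → ℝ) (hf : IsDFQuADEval Q f) (hf' : IsDFQuADEval Q' f') :
    f a = f' a := by
  have hY_eq : Y = {a} ∪ Q.toBAF.ancestors a := hY
  have hY_eq' : Y = {a} ∪ Q'.toBAF.ancestors a := hY'.symm
  refine hf.eqOn_of_agree hf' hQ.1.acyclic ?_ ?_ ?_ ?_ hbs hA hS (hY_eq ▸ Or.inl rfl)
  · exact hY_eq ▸ BAF.singleton_union_ancestors_subset haQ
  · exact hY_eq' ▸ BAF.singleton_union_ancestors_subset haQ'
  · intro b hb c hc
    rw [hY_eq] at hb ⊢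
    exact Or.inr (BAF.mem_ancestors_of_edge (hQ.1.fst_mem hc) hb hc)
  · intro b hb c hc
    rw [hY_eq'] at hb ⊢
    exact Or.inr (BAF.mem_ancestors_of_edge (hQ'.1.fst_mem hc) hb hc)
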